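/- arXiv:2304.12714 — 2 statements merged into one kernel-verified Lean document; each statement's English description precedes it below -/
import Mathlib

section
/- Let n ≥ 2, 0 < ε < 1/2, and q a real number with 2 < q ≤ n+1. Then ∫_{S^{n-1}} (|y'|² + ε² y_n²)^{(q-1-n)/2} dy ≤ C where C depends only on n and q (and is independent of ε). -/
open MeasureTheory Metric Real Filter
noncomputable section
abbrev Euc (n : ℕ) := EuclideanSpace ℝ (Fin n)
/-- Spherical Lebesgue measure on the unit sphere `S^{n-1}` (total mass `n·ω_n`). -/
def sphMeasure (n : ℕ) : Measure (sphere (0 : Euc n) 1) := volume.toSphere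
/-- `X_K(x,u)`: length of the chord `K ∩ (x + ℝu)`. -/
def chordLen {n : ℕ} (K : Set (Euc n)) (x u : Euc n) : ℝ :=
  (volume {t : ℝ | x + t • u ∈ K}).toReal
/-- The chord integral `I_q(K) = (1/(n ω_n)) ∫_{S^{n-1}} ∫_{u^⊥} X_K(x,u)^q dx du`. -/
def chordIntegral (n : ℕ) (q : ℝ) (K : Set (Euc n)) : ℝ :=
  (1 / (n * (volume (ball (0 : Euc n) 1)).toReal)) *
    ∫ u : sphere (0 : Euc n) 1,
      (∫ x : (ℝ ∙ (u : Euc n))ᗮ, chordLen K (x : Euc n) (u : Euc n) ^ q) ∂(sphMeasure n)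
/-- `|x'|² = x₁² + ⋯ + x_{n-1}²`. -/
def xprimeSq (n : ℕ) (x : Euc n) : ℝ := ∑ i : Fin n, if (i : ℕ) < n - 1 then (x i) ^ 2 else 0
/-- The last coordinate `x_n`. -/
def lastCoord (n : ℕ) (x : Euc n) : ℝ :=
  if h : n = 0 then 0 else x ⟨n - 1, Nat.sub_lt (Nat.pos_of_ne_zero h) one_pos⟩

open scoped ENNReal

namespace SphereBoundAux

lemma xprimeSq_nonneg (n : ℕ) (x : Euc n) : 0 ≤ xprimeSq n x :=
  Finset.sum_nonneg fun i _ => by split_ifs <;> positivity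

lemma xprimeSq_smul (n : ℕ) (r : ℝ) (x : Euc n) :
    xprimeSq n (r • x) = r ^ 2 * xprimeSq n x := by
  simp only [xprimeSq, Finset.mul_sum, PiLp.smul_apply, smul_eq_mul]
  refine Finset.sum_congr rfl fun i _ => ?_
  split_ifs <;> ring

lemma lastCoord_smul (n : ℕ) (r : ℝ) (x : Euc n) :
    lastCoord n (r • x) = r * lastCoord n x := by
  unfold lastCoord
  split
  · ring
  · simp [PiLp.smul_apply]

lemma coord_abs_le_norm (n : ℕ) (x : Euc n) (i : Fin n) : |x i| ≤ ‖x‖ := by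
  rw [EuclideanSpace.norm_eq, ← Real.sqrt_sq_eq_abs]
  apply Real.sqrt_le_sqrt
  calc x i ^ 2 = ‖x i‖ ^ 2 := by rw [Real.norm_eq_abs, sq_abs]
    _ ≤ ∑ j : Fin n, ‖x j‖ ^ 2 :=
        Finset.single_le_sum (f := fun j => ‖x j‖ ^ 2) (fun j _ => sq_nonneg _)
          (Finset.mem_univ i)

lemma xprimeSq_le_normsq (n : ℕ) (x : Euc n) : xprimeSq n x ≤ ‖x‖ ^ 2 := by
  rw [EuclideanSpace.norm_eq, Real.sq_sqrt (Finset.sum_nonneg fun i _ => sq_nonneg _)]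
  refine Finset.sum_le_sum fun i _ => ?_
  rw [Real.norm_eq_abs, sq_abs]
  split_ifs
  · exact le_rfl
  · positivity

lemma measurable_coord (n : ℕ) (i : Fin n) : Measurable fun x : Euc n => x i :=
  (measurable_pi_apply i).comp (MeasurableEquiv.toLp 2 (Fin n → ℝ)).symm.measurable

lemma measurable_xprimeSq (n : ℕ) : Measurable (xprimeSq n) := by
  unfold xprimeSq
  refine Finset.measurable_sum _ fun i _ => ?_
  split_ifs
  · exact (measurable_coord n i).pow_const 2
  · exact measurable_const

lemma measurable_lastCoord (n : ℕ) : Measurable (lastCoord n) := by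
  unfold lastCoord
  split
  · exact measurable_const
  · exact measurable_coord n _

lemma euc_nontrivial (n : ℕ) (hn : 1 ≤ n) : Nontrivial (Euc n) := by
  refine ⟨⟨EuclideanSpace.single (⟨0, hn⟩ : Fin n) (1 : ℝ), 0, fun h => ?_⟩⟩
  have := congrArg (fun v : Euc n => v (⟨0, hn⟩ : Fin n)) h
  simp [EuclideanSpace.single_apply] at this

/-- Polar coordinates for lower Lebesgue integrals on `Euc n`. -/
lemma lintegral_polar (n : ℕ) (hn : 1 ≤ n) (f : Euc n → ℝ≥0∞) (hf : Measurable f) :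
    ∫⁻ x, f x =
      ∫⁻ p : (sphere (0 : Euc n) 1) × (Set.Ioi (0 : ℝ)),
        f ((p.2 : ℝ) • (p.1 : Euc n))
        ∂((volume : Measure (Euc n)).toSphere.prod (Measure.volumeIoiPow (n - 1))) := by
  haveI := euc_nontrivial n hn
  have h := Measure.measurePreserving_homeomorphUnitSphereProd (volume : Measure (Euc n))
  rw [finrank_euclideanSpace_fin] at h
  have hF : Measurable fun p : (sphere (0 : Euc n) 1) × (Set.Ioi (0 : ℝ)) =>
      f ((p.2 : ℝ) • (p.1 : Euc n)) :=
    hf.comp ((measurable_subtype_coe.comp measurable_snd).smul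
      (measurable_subtype_coe.comp measurable_fst))
  rw [← h.lintegral_comp hF]
  have hpt : ∀ a : ({0}ᶜ : Set (Euc n)),
      f ((((homeomorphUnitSphereProd (Euc n)) a).2 : ℝ) •
        (((homeomorphUnitSphereProd (Euc n)) a).1 : Euc n)) = f a.1 := by
    intro a
    have ha : (a : Euc n) ≠ 0 := a.2
    rw [homeomorphUnitSphereProd_apply_snd_coe, homeomorphUnitSphereProd_apply_fst_coe,
      smul_inv_smul₀ (norm_ne_zero_iff.2 ha)]
  rw [lintegral_congr hpt,
    lintegral_subtype_comap (measurableSet_singleton (0 : Euc n)).compl,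
    restrict_compl_singleton]

/-- Finiteness of `∫_{B(0,R)} ‖w‖^s dw` for `s > -m`. -/
lemma lintegral_ball_rpow_lt_top (m : ℕ) (hm : 1 ≤ m) (s R : ℝ) (hs : -(m : ℝ) < s) :
    ∫⁻ w : Euc m, (ball (0 : Euc m) R).indicator
      (fun w => ENNReal.ofReal (‖w‖ ^ s)) w < ⊤ := by
  have hmeas : Measurable fun w : Euc m => ENNReal.ofReal (‖w‖ ^ s) :=
    (measurable_norm.pow measurable_const).ennreal_ofReal
  rw [lintegral_polar m hm _ (hmeas.indicator measurableSet_ball)]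
  set k : (Set.Ioi (0 : ℝ)) → ℝ≥0∞ :=
    fun r => if (r : ℝ) < R then ENNReal.ofReal ((r : ℝ) ^ s) else 0 with hk_def
  have hk : Measurable k := by
    refine Measurable.ite ?_ ((measurable_subtype_coe.pow measurable_const).ennreal_ofReal)
      measurable_const
    exact measurableSet_lt measurable_subtype_coe measurable_const
  have hpt : ∀ p : (sphere (0 : Euc m) 1) × (Set.Ioi (0 : ℝ)),
      (ball (0 : Euc m) R).indicator (fun w => ENNReal.ofReal (‖w‖ ^ s))
        ((p.2 : ℝ) • (p.1 : Euc m)) = (fun _ => (1 : ℝ≥0∞)) p.1 * k p.2 := by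
    rintro ⟨y, r⟩
    have hy : ‖(y : Euc m)‖ = 1 := mem_sphere_zero_iff_norm.1 y.2
    have hr : (0 : ℝ) < r := r.2
    have hnorm : ‖(r : ℝ) • (y : Euc m)‖ = (r : ℝ) := by
      rw [norm_smul, hy, mul_one, Real.norm_eq_abs, abs_of_pos hr]
    classical
    rw [Set.indicator_apply, mem_ball_zero_iff, hnorm, one_mul, hk_def]
  rw [lintegral_congr hpt, lintegral_prod_mul measurable_const.aemeasurable hk.aemeasurable,
    lintegral_one]
  refine ENNReal.mul_lt_top (measure_lt_top _ _) ?_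
  have hdens : Measurable fun r : (Set.Ioi (0 : ℝ)) =>
      ENNReal.ofReal ((r : ℝ) ^ (m - 1)) :=
    (measurable_subtype_coe.pow_const (m - 1)).ennreal_ofReal
  rw [Measure.volumeIoiPow, lintegral_withDensity_eq_lintegral_mul _ hdens hk]
  have hcongr : ∫⁻ a : (Set.Ioi (0:ℝ)),
      ((fun r : (Set.Ioi (0:ℝ)) => ENNReal.ofReal ((r : ℝ) ^ (m - 1))) * k) a
        ∂(Measure.comap Subtype.val volume) =
      ∫⁻ a : (Set.Ioi (0:ℝ)), (fun t : ℝ => ENNReal.ofReal (t ^ (m - 1)) *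
        (if t < R then ENNReal.ofReal (t ^ s) else 0)) (a : ℝ)
        ∂(Measure.comap Subtype.val volume) := by
    refine lintegral_congr fun a => ?_
    simp only [Pi.mul_apply, hk_def]
  have heq := lintegral_subtype_comap (μ := volume) (measurableSet_Ioi (a := (0:ℝ)))
    (fun t : ℝ => ENNReal.ofReal (t ^ (m - 1)) * (if t < R then ENNReal.ofReal (t ^ s) else 0))
  rw [hcongr, heq]
  set R' : ℝ := max R 1 with hR'
  have hR'pos : (0 : ℝ) < R' := lt_of_lt_of_le one_pos (le_max_right _ _)
  set te : ℝ := ((m - 1 : ℕ) : ℝ) + s with hte_def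
  have hte : (-1 : ℝ) < te := by
    have : ((m - 1 : ℕ) : ℝ) = (m : ℝ) - 1 := by
      rw [Nat.cast_sub hm, Nat.cast_one]
    rw [hte_def, this]; linarith
  have hmono : ∀ t ∈ Set.Ioi (0 : ℝ),
      ENNReal.ofReal (t ^ (m - 1)) * (if t < R then ENNReal.ofReal (t ^ s) else 0)
        ≤ (Set.Ioo (0 : ℝ) R').indicator (fun t => ENNReal.ofReal (t ^ te)) t := by
    intro t ht
    by_cases hR : t < R
    · have ht0 : (0 : ℝ) < t := ht
      rw [if_pos hR, Set.indicator_of_mem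
          (Set.mem_Ioo.2 ⟨ht0, lt_of_lt_of_le hR (le_max_left _ _)⟩),
        ← ENNReal.ofReal_mul (pow_nonneg ht0.le _)]
      apply le_of_eq
      congr 1
      rw [← Real.rpow_natCast t (m - 1), ← Real.rpow_add ht0]
    · rw [if_neg hR, mul_zero]
      exact zero_le
  calc ∫⁻ t in Set.Ioi (0 : ℝ),
        ENNReal.ofReal (t ^ (m - 1)) * (if t < R then ENNReal.ofReal (t ^ s) else 0)
      ≤ ∫⁻ t in Set.Ioi (0 : ℝ),
        (Set.Ioo (0 : ℝ) R').indicator (fun t => ENNReal.ofReal (t ^ te)) t :=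
        setLIntegral_mono' measurableSet_Ioi hmono
    _ ≤ ∫⁻ t, (Set.Ioo (0 : ℝ) R').indicator (fun t => ENNReal.ofReal (t ^ te)) t :=
        setLIntegral_le_lintegral _ _
    _ = ∫⁻ t in Set.Ioo (0 : ℝ) R', ENNReal.ofReal (t ^ te) :=
        lintegral_indicator measurableSet_Ioo _
    _ ≤ ∫⁻ t in Set.Ioc (0 : ℝ) R', ENNReal.ofReal (t ^ te) :=
        lintegral_mono_set Set.Ioo_subset_Ioc_self
    _ ≤ ∫⁻ t in Set.Ioc (0 : ℝ) R', (‖t ^ te‖₊ : ℝ≥0∞) :=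
        lintegral_mono fun t => Real.ofReal_le_enorm _
    _ < ⊤ := by
        have hII : IntervalIntegrable (fun t : ℝ => t ^ te) volume 0 R' :=
          intervalIntegral.intervalIntegrable_rpow' hte
        rw [intervalIntegrable_iff, Set.uIoc_of_le hR'pos.le] at hII
        exact hII.2

end SphereBoundAux

open SphereBoundAux

set_option maxHeartbeats 1000000 in
/-- For `2 < q ≤ n+1`, `∫_{S^{n-1}} (|y'|² + ε² y_n²)^{(q-1-n)/2} dy ≤ C` uniformly in
`ε ∈ (0,1/2)`. -/
theorem sphere_integral_bound_q_gt_two (n : ℕ) (hn : 2 ≤ n) (q : ℝ)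
    (hq : 2 < q) (hq' : q ≤ (n : ℝ) + 1) :
    ∃ C : ℝ, ∀ ε : ℝ, 0 < ε → ε < 1 / 2 →
      (∫ y : sphere (0 : Euc n) 1,
          (xprimeSq n (y : Euc n) + ε ^ 2 * lastCoord n (y : Euc n) ^ 2) ^ ((q - 1 - n) / 2)
        ∂(sphMeasure n)) ≤ C := by
  obtain ⟨m, rfl⟩ : ∃ m, n = m + 1 := ⟨n - 1, by omega⟩
  have hm : 1 ≤ m := by omega
  have hcast : ((m + 1 : ℕ) : ℝ) = (m : ℝ) + 1 := by push_cast; ring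
  set e : ℝ := (q - 1 - ((m + 1 : ℕ) : ℝ)) / 2 with he_def
  have he0 : e ≤ 0 := by
    rw [he_def, hcast]
    have : q ≤ (m : ℝ) + 2 := by rw [hcast] at hq'; linarith
    linarith
  have h2e : -(m : ℝ) < 2 * e := by
    rw [he_def, hcast]
    linarith
  have hqe : 0 < (m : ℝ) + 2 * e := by linarith
  set J : ℝ≥0∞ := ∫⁻ w : Euc m, (ball (0 : Euc m) 3).indicator
      (fun w => ENNReal.ofReal (‖w‖ ^ (2 * e))) w with hJ_def
  have hJ : J < ⊤ := lintegral_ball_rpow_lt_top m hm (2 * e) 3 h2e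
  refine ⟨(ENNReal.ofReal 4 * J).toReal, fun ε hε hε2 => ?_⟩
  -- the nonnegative integrand
  set F : sphere (0 : Euc (m + 1)) 1 → ℝ :=
    fun y => (xprimeSq (m + 1) (y : Euc (m + 1)) +
      ε ^ 2 * lastCoord (m + 1) (y : Euc (m + 1)) ^ 2) ^ e with hF_def
  have hbase_nn : ∀ x : Euc (m + 1),
      0 ≤ xprimeSq (m + 1) x + ε ^ 2 * lastCoord (m + 1) x ^ 2 := fun x =>
    add_nonneg (xprimeSq_nonneg _ _) (by positivity)
  have hFnn : ∀ y, 0 ≤ F y := fun y => Real.rpow_nonneg (hbase_nn _) _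
  -- measurability
  have hbase : Measurable fun x : Euc (m + 1) =>
      xprimeSq (m + 1) x + ε ^ 2 * lastCoord (m + 1) x ^ 2 :=
    (measurable_xprimeSq _).add
      (measurable_const.mul ((measurable_lastCoord _).pow_const 2))
  have hg : Measurable fun y : sphere (0 : Euc (m + 1)) 1 =>
      ENNReal.ofReal (F y) :=
    (((hbase.comp measurable_subtype_coe).pow measurable_const).ennreal_ofReal)
  -- the key lintegral bound
  have hkey : (∫⁻ y, ENNReal.ofReal (F y) ∂((volume : Measure (Euc (m+1))).toSphere))
      ≤ ENNReal.ofReal 4 * J := by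
    classical
    -- auxiliary functions
    set φ : ℝ → ℝ≥0∞ := fun b => if b ≤ 4 then ENNReal.ofReal (b ^ e) else 0 with hφ_def
    set ψ : ℝ → ℝ≥0∞ := fun t => (Set.Icc (-2 : ℝ) 2).indicator (fun _ => 1) t with hψ_def
    have hφ : Measurable φ := by
      refine Measurable.ite (measurableSet_le measurable_id measurable_const)
        ((measurable_id.pow measurable_const).ennreal_ofReal) measurable_const
    have hψ : Measurable ψ := measurable_const.indicator measurableSet_Icc
    set f : Euc (m + 1) → ℝ≥0∞ := fun x =>
      ENNReal.ofReal ((xprimeSq (m + 1) x + ε ^ 2 * lastCoord (m + 1) x ^ 2) ^ e) *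
        (Set.Icc (1 : ℝ) 2).indicator (fun _ => 1) ‖x‖ with hf_def
    have hf : Measurable f :=
      ((hbase.pow measurable_const).ennreal_ofReal).mul
        ((measurable_const.indicator measurableSet_Icc).comp measurable_norm)
    set H : Euc (m + 1) → ℝ≥0∞ := fun x =>
      ψ (lastCoord (m + 1) x) * φ (xprimeSq (m + 1) x) with hH_def
    have hH : Measurable H :=
      (hψ.comp (measurable_lastCoord _)).mul (hφ.comp (measurable_xprimeSq _))
    set k : (Set.Ioi (0 : ℝ)) → ℝ≥0∞ :=
      fun r => (Set.Icc (1 : ℝ) 2).indicator (fun t => ENNReal.ofReal (t ^ (2 * e))) (r : ℝ)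
      with hk_def
    have hk : Measurable k :=
      (((measurable_id.pow measurable_const).ennreal_ofReal).indicator
        measurableSet_Icc).comp measurable_subtype_coe
    -- Step 1 : 1 ≤ ∫ k dν
    have hc1 : 1 ≤ ∫⁻ r, k r ∂(Measure.volumeIoiPow m) := by
      have hdens : Measurable fun r : (Set.Ioi (0 : ℝ)) =>
          ENNReal.ofReal ((r : ℝ) ^ m) :=
        (measurable_subtype_coe.pow_const m).ennreal_ofReal
      rw [Measure.volumeIoiPow, lintegral_withDensity_eq_lintegral_mul _ hdens hk]
      have hcongr : ∫⁻ a : (Set.Ioi (0:ℝ)),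
          ((fun r : (Set.Ioi (0:ℝ)) => ENNReal.ofReal ((r : ℝ) ^ m)) * k) a
            ∂(Measure.comap Subtype.val volume) =
          ∫⁻ a : (Set.Ioi (0:ℝ)), (fun t : ℝ => ENNReal.ofReal (t ^ m) *
            (Set.Icc (1 : ℝ) 2).indicator (fun u => ENNReal.ofReal (u ^ (2 * e))) t) (a : ℝ)
            ∂(Measure.comap Subtype.val volume) := by
        refine lintegral_congr fun a => ?_
        simp only [Pi.mul_apply, hk_def]
      have heq := lintegral_subtype_comap (μ := volume) (measurableSet_Ioi (a := (0:ℝ)))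
        (fun t : ℝ => ENNReal.ofReal (t ^ m) *
          (Set.Icc (1 : ℝ) 2).indicator (fun u => ENNReal.ofReal (u ^ (2 * e))) t)
      rw [hcongr, heq]
      have hIccIoi : Set.Icc (1 : ℝ) 2 ⊆ Set.Ioi (0 : ℝ) := fun t ht =>
        lt_of_lt_of_le one_pos ht.1
      have hmono : ∀ t ∈ Set.Ioi (0 : ℝ),
          (Set.Icc (1 : ℝ) 2).indicator (fun _ => (1 : ℝ≥0∞)) t ≤
            ENNReal.ofReal (t ^ m) *
              (Set.Icc (1 : ℝ) 2).indicator (fun u => ENNReal.ofReal (u ^ (2 * e))) t := by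
        intro t _
        by_cases hmem : t ∈ Set.Icc (1 : ℝ) 2
        · have ht1 : (0:ℝ) ≤ t := le_trans zero_le_one hmem.1
          rw [Set.indicator_of_mem hmem, Set.indicator_of_mem hmem,
            ← ENNReal.ofReal_mul (pow_nonneg ht1 _)]
          have ht0 : (0 : ℝ) < t := lt_of_lt_of_le one_pos hmem.1
          have h1t : (1 : ℝ) ≤ t ^ m * t ^ (2 * e) := by
            rw [← Real.rpow_natCast t m, ← Real.rpow_add ht0]
            exact Real.one_le_rpow hmem.1 (by linarith)
          exact ENNReal.one_le_ofReal.2 h1t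
        · rw [Set.indicator_of_notMem hmem, Set.indicator_of_notMem hmem, mul_zero]
      calc (1 : ℝ≥0∞) = volume (Set.Icc (1 : ℝ) 2) := by
            rw [Real.volume_Icc]; norm_num
        _ = ∫⁻ t in Set.Ioi (0 : ℝ),
              (Set.Icc (1 : ℝ) 2).indicator (fun _ => (1 : ℝ≥0∞)) t := by
            rw [lintegral_indicator measurableSet_Icc, setLIntegral_one,
              Measure.restrict_apply measurableSet_Icc,
              Set.inter_eq_self_of_subset_left hIccIoi]
        _ ≤ _ := setLIntegral_mono' measurableSet_Ioi hmono
    -- Step 2 : product equals lintegral of f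
    have hfpol : ∀ p : (sphere (0 : Euc (m + 1)) 1) × (Set.Ioi (0 : ℝ)),
        ENNReal.ofReal (F p.1) * k p.2 = f ((p.2 : ℝ) • (p.1 : Euc (m + 1))) := by
      rintro ⟨y, r⟩
      have hy : ‖(y : Euc (m + 1))‖ = 1 := mem_sphere_zero_iff_norm.1 y.2
      have hr : (0 : ℝ) < r := r.2
      have hnorm : ‖(r : ℝ) • (y : Euc (m + 1))‖ = (r : ℝ) := by
        rw [norm_smul, hy, mul_one, Real.norm_eq_abs, abs_of_pos hr]
      simp only [hf_def]
      rw [hnorm, xprimeSq_smul, lastCoord_smul]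
      have hbb : (r : ℝ) ^ 2 * xprimeSq (m + 1) (y : Euc (m + 1)) +
          ε ^ 2 * ((r : ℝ) * lastCoord (m + 1) (y : Euc (m + 1))) ^ 2 =
          (r : ℝ) ^ 2 * (xprimeSq (m + 1) (y : Euc (m + 1)) +
            ε ^ 2 * lastCoord (m + 1) (y : Euc (m + 1)) ^ 2) := by ring
      rw [hbb, Real.mul_rpow (by positivity) (hbase_nn _),
        ENNReal.ofReal_mul (by positivity)]
      have hr2e : ((r : ℝ) ^ 2) ^ e = (r : ℝ) ^ (2 * e) := by
        rw [← Real.rpow_natCast (r : ℝ) 2, ← Real.rpow_mul hr.le]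
        norm_num
      simp only [hr2e, hF_def, hk_def]
      by_cases hmem : (r : ℝ) ∈ Set.Icc (1 : ℝ) 2
      · rw [Set.indicator_of_mem hmem, Set.indicator_of_mem hmem, mul_one]
        ring
      · rw [Set.indicator_of_notMem hmem, Set.indicator_of_notMem hmem, mul_zero, mul_zero]
    -- Step 3 : a.e. bound f ≤ H
    have hnull : (volume : Measure (Euc (m + 1))) {x | xprimeSq (m + 1) x = 0} = 0 := by
      set L : Euc (m + 1) →ₗ[ℝ] ℝ :=
        (LinearMap.proj (⟨0, by omega⟩ : Fin (m + 1))).comp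
          (WithLp.linearEquiv 2 ℝ (Fin (m + 1) → ℝ)).toLinearMap with hL_def
      have hsub : {x : Euc (m + 1) | xprimeSq (m + 1) x = 0} ⊆
          (LinearMap.ker L : Set (Euc (m + 1))) := by
        intro x hx
        have h0 : ∀ i ∈ Finset.univ, (if ((i : Fin (m+1)) : ℕ) < (m + 1) - 1
            then (x i) ^ 2 else 0) = 0 := by
          rw [← Finset.sum_eq_zero_iff_of_nonneg (fun i _ => by split_ifs <;> positivity)]
          exact hx
        have := h0 (⟨0, by omega⟩ : Fin (m + 1)) (Finset.mem_univ _)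
        rw [if_pos (by simp; omega)] at this
        have hx0 : x (⟨0, by omega⟩ : Fin (m + 1)) = 0 := by
          nlinarith [this]
        exact LinearMap.mem_ker.2 hx0
      have hker : LinearMap.ker L ≠ ⊤ := by
        intro htop
        have hmem : EuclideanSpace.single (⟨0, by omega⟩ : Fin (m + 1)) (1 : ℝ) ∈
            LinearMap.ker L := htop ▸ Submodule.mem_top
        have := LinearMap.mem_ker.1 hmem
        rw [hL_def] at this
        simp [EuclideanSpace.single_apply] at this
      exact measure_mono_null hsub (Measure.addHaar_submodule _ _ hker)
    have hae : ∀ᵐ x : Euc (m + 1), f x ≤ H x := by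
      refine measure_mono_null ?_ hnull
      intro x hx
      simp only [Set.mem_setOf_eq] at hx ⊢
      by_contra hxp0
      apply hx
      -- show f x ≤ H x whenever xprimeSq x ≠ 0
      have hxp : 0 < xprimeSq (m + 1) x :=
        lt_of_le_of_ne (xprimeSq_nonneg _ _) (Ne.symm hxp0)
      show f x ≤ H x
      simp only [hf_def, hH_def]
      by_cases hmem : ‖x‖ ∈ Set.Icc (1 : ℝ) 2
      · rw [Set.indicator_of_mem hmem, mul_one]
        have hlast : |lastCoord (m + 1) x| ≤ 2 := by
          rcases le_or_gt (m + 1) 0 with h | _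
          · omega
          have : |lastCoord (m + 1) x| ≤ ‖x‖ := by
            unfold lastCoord
            rw [dif_neg (Nat.succ_ne_zero m)]
            exact coord_abs_le_norm _ x _
          linarith [hmem.2]
        have hψ1 : ψ (lastCoord (m + 1) x) = 1 := by
          rw [hψ_def]
          exact Set.indicator_of_mem (Set.mem_Icc.2 (abs_le.1 hlast)) _
        have hxp4 : xprimeSq (m + 1) x ≤ 4 := by
          have h1 := xprimeSq_le_normsq (m + 1) x
          have h2 : ‖x‖ ^ 2 ≤ 4 := by nlinarith [hmem.2, norm_nonneg x]
          linarith
        have hφv : φ (xprimeSq (m + 1) x) = ENNReal.ofReal (xprimeSq (m + 1) x ^ e) := by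
          rw [hφ_def]; exact if_pos hxp4
        rw [hψ1, hφv, one_mul]
        apply ENNReal.ofReal_le_ofReal
        exact Real.rpow_le_rpow_of_nonpos hxp
          (le_add_of_nonneg_right (by positivity)) he0
      · rw [Set.indicator_of_notMem hmem, mul_zero]
        exact zero_le
    -- Step 4 : lintegral of H
    have hHsum : ∫⁻ x : Euc (m + 1), H x ≤ ENNReal.ofReal 4 * J := by
      -- move to pi space
      have hstep1 : ∫⁻ x : Euc (m + 1), H x =
          ∫⁻ v : Fin (m + 1) → ℝ,
            ψ (v (Fin.last m)) * φ (∑ i : Fin (m + 1), if (i : ℕ) < m then (v i) ^ 2 else 0) := by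
        rw [← ((MeasurePreserving.symm _ (EuclideanSpace.volume_preserving_symm_measurableEquiv_toLp
          (Fin (m + 1)))).lintegral_comp hH)]
        exact lintegral_congr fun v => rfl
      have hG' : Measurable fun p : ℝ × (Fin m → ℝ) =>
          ψ p.1 * φ (∑ j : Fin m, (p.2 j) ^ 2) :=
        (hψ.comp measurable_fst).mul (hφ.comp
          (Finset.measurable_sum _ fun j _ => ((measurable_pi_apply j).comp
            measurable_snd).pow_const 2))
      have hstep2 : ∫⁻ v : Fin (m + 1) → ℝ,
          ψ (v (Fin.last m)) * φ (∑ i : Fin (m + 1), if (i : ℕ) < m then (v i) ^ 2 else 0) =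
          ∫⁻ p : ℝ × (Fin m → ℝ), ψ p.1 * φ (∑ j : Fin m, (p.2 j) ^ 2) := by
        rw [← (volume_preserving_piFinSuccAbove (fun _ : Fin (m + 1) => ℝ)
          (Fin.last m)).lintegral_comp hG']
        refine lintegral_congr fun v => ?_
        congr 2
        rw [Fin.sum_univ_castSucc
          (f := fun i : Fin (m + 1) => if (i : ℕ) < m then (v i) ^ 2 else 0)]
        simp [MeasurableEquiv.piFinSuccAbove, Fin.succAbove_last, Fin.is_lt, Fin.init]
      have hstep3 : ∫⁻ p : ℝ × (Fin m → ℝ), ψ p.1 * φ (∑ j : Fin m, (p.2 j) ^ 2) =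
          (∫⁻ t : ℝ, ψ t) * ∫⁻ v : Fin m → ℝ, φ (∑ j : Fin m, (v j) ^ 2) := by
        rw [Measure.volume_eq_prod]
        exact lintegral_prod_mul hψ.aemeasurable
          ((hφ.comp (Finset.measurable_sum _ fun j _ =>
            (measurable_pi_apply j).pow_const 2)).aemeasurable)
      have hψint : ∫⁻ t : ℝ, ψ t = ENNReal.ofReal 4 := by
        rw [hψ_def]
        rw [lintegral_indicator measurableSet_Icc, setLIntegral_one, Real.volume_Icc]
        norm_num
      have hstep4 : ∫⁻ v : Fin m → ℝ, φ (∑ j : Fin m, (v j) ^ 2) =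
          ∫⁻ w : Euc m, φ (∑ j : Fin m, (w j) ^ 2) := by
        exact ((EuclideanSpace.volume_preserving_symm_measurableEquiv_toLp
          (Fin m)).lintegral_comp (hφ.comp (Finset.measurable_sum _ fun j _ =>
            (measurable_pi_apply j).pow_const 2))).symm
      have hstep5 : ∫⁻ w : Euc m, φ (∑ j : Fin m, (w j) ^ 2) ≤ J := by
        rw [hJ_def]
        refine lintegral_mono fun w => ?_
        have hsum : ∑ j : Fin m, (w j) ^ 2 = ‖w‖ ^ 2 := by
          rw [EuclideanSpace.norm_eq,
            Real.sq_sqrt (Finset.sum_nonneg fun i _ => sq_nonneg _)]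
          simp [Real.norm_eq_abs, sq_abs]
        rw [hφ_def]
        simp only [hsum]
        by_cases h4 : ‖w‖ ^ 2 ≤ 4
        · rw [if_pos h4]
          have hw2 : ‖w‖ < 3 := by nlinarith [norm_nonneg w]
          rw [Set.indicator_of_mem (mem_ball_zero_iff.2 hw2)]
          apply le_of_eq
          congr 1
          rw [← Real.rpow_natCast ‖w‖ 2, ← Real.rpow_mul (norm_nonneg w)]
          norm_num
        · rw [if_neg h4]
          exact zero_le
      calc ∫⁻ x : Euc (m + 1), H x
          = (∫⁻ t : ℝ, ψ t) * ∫⁻ v : Fin m → ℝ, φ (∑ j : Fin m, (v j) ^ 2) := by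
            rw [hstep1, hstep2, hstep3]
        _ = ENNReal.ofReal 4 * ∫⁻ w : Euc m, φ (∑ j : Fin m, (w j) ^ 2) := by
            rw [hψint, hstep4]
        _ ≤ ENNReal.ofReal 4 * J := mul_le_mul_right hstep5 _
    -- assemble
    calc ∫⁻ y, ENNReal.ofReal (F y) ∂((volume : Measure (Euc (m+1))).toSphere)
        ≤ (∫⁻ y, ENNReal.ofReal (F y) ∂((volume : Measure (Euc (m+1))).toSphere)) *
            ∫⁻ r, k r ∂(Measure.volumeIoiPow m) :=
          le_mul_of_one_le_right zero_le hc1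
      _ = ∫⁻ p : (sphere (0 : Euc (m + 1)) 1) × (Set.Ioi (0 : ℝ)),
            ENNReal.ofReal (F p.1) * k p.2
            ∂((volume : Measure (Euc (m+1))).toSphere.prod (Measure.volumeIoiPow m)) :=
          (lintegral_prod_mul hg.aemeasurable hk.aemeasurable).symm
      _ = ∫⁻ x : Euc (m + 1), f x := by
          rw [lintegral_polar (m + 1) (by omega) f hf]
          exact lintegral_congr hfpol
      _ ≤ ∫⁻ x : Euc (m + 1), H x := lintegral_mono_ae hae
      _ ≤ ENNReal.ofReal 4 * J := hHsum
  -- conclude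
  have hCnn : (0 : ℝ) ≤ (ENNReal.ofReal 4 * J).toReal := ENNReal.toReal_nonneg
  have hsph : sphMeasure (m + 1) = (volume : Measure (Euc (m+1))).toSphere := rfl
  by_cases hint : Integrable F (sphMeasure (m + 1))
  · rw [show (∫ y : sphere (0 : Euc (m+1)) 1,
        (xprimeSq (m+1) (y : Euc (m+1)) + ε ^ 2 * lastCoord (m+1) (y : Euc (m+1)) ^ 2) ^
          ((q - 1 - ((m+1 : ℕ) : ℝ)) / 2) ∂(sphMeasure (m+1))) = ∫ y, F y ∂(sphMeasure (m+1))
      from rfl]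
    rw [integral_eq_lintegral_of_nonneg_ae (Filter.Eventually.of_forall hFnn)
      hint.aestronglyMeasurable]
    rw [hsph]
    exact ENNReal.toReal_mono (ENNReal.mul_ne_top (by simp) hJ.ne) hkey
  · rw [show (∫ y : sphere (0 : Euc (m+1)) 1,
        (xprimeSq (m+1) (y : Euc (m+1)) + ε ^ 2 * lastCoord (m+1) (y : Euc (m+1)) ^ 2) ^
          ((q - 1 - ((m+1 : ℕ) : ℝ)) / 2) ∂(sphMeasure (m+1))) = ∫ y, F y ∂(sphMeasure (m+1))
      from rfl]
    rw [integral_undef hint]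
    exact hCnn
end
end

section
/- Let n ≥ 2, 0 < ε < 1/2, and q = 2 ≤ n+1. Then ∫_{S^{n-1}} (|y'|² + ε² y_n²)^{(1-n)/2} dy ≤ C(1 + |log ε|) where C depends only on n. -/
open MeasureTheory Metric Real Filter
open Set Pointwise ENNReal
noncomputable section
lemma xprimeSq_nonneg (n : ℕ) (x : Euc n) : 0 ≤ xprimeSq n x :=
  Finset.sum_nonneg fun i _ => by split_ifs <;> positivity

lemma coord_sq_le_xprimeSq (n : ℕ) (x : Euc n) (i : Fin n) (hi : (i : ℕ) < n - 1) :
    x i ^ 2 ≤ xprimeSq n x := by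
  have := Finset.single_le_sum (f := fun j : Fin n => if (j : ℕ) < n - 1 then (x j) ^ 2 else 0)
    (fun j _ => by dsimp only; split_ifs <;> positivity) (Finset.mem_univ i)
  simp only [hi, if_pos] at this
  exact this

lemma xprimeSq_continuous (n : ℕ) : Continuous (xprimeSq n) := by
  unfold xprimeSq
  exact continuous_finset_sum _ fun i _ => by
    split_ifs
    · exact ((continuous_apply i).comp (PiLp.continuous_ofLp 2 fun _ : Fin n => ℝ)).pow 2
    · exact continuous_const

lemma sum_sq_eq_one {n : ℕ} (y : Euc n) (hy : ‖y‖ = 1) : ∑ i, y i ^ 2 = 1 := by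
  have h := EuclideanSpace.norm_eq y
  rw [hy] at h
  simp only [Real.norm_eq_abs, sq_abs] at h
  have h2 : Real.sqrt (∑ i, y i ^ 2) = 1 := h.symm
  have := congrArg (· ^ 2) h2
  simpa [Real.sq_sqrt (Finset.sum_nonneg fun i _ => sq_nonneg (y i))] using this

lemma xprimeSq_add_last (n : ℕ) (hn : 1 ≤ n) (x : Euc n) :
    xprimeSq n x + lastCoord n x ^ 2 = ∑ i, x i ^ 2 := by
  have h0 : n ≠ 0 := by omega
  unfold xprimeSq lastCoord
  rw [dif_neg h0]
  set L : Fin n := ⟨n - 1, Nat.sub_lt (Nat.pos_of_ne_zero h0) one_pos⟩ with hL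
  have key : ∀ i : Fin n, x i ^ 2 =
      (if (i : ℕ) < n - 1 then x i ^ 2 else 0) + (if i = L then x i ^ 2 else 0) := by
    intro i
    rcases lt_or_ge (i : ℕ) (n - 1) with h | h
    · rw [if_pos h, if_neg, add_zero]
      intro he
      rw [he] at h
      simp [hL] at h
    · have hi : (i : ℕ) = n - 1 := by omega
      rw [if_neg (by omega), if_pos (Fin.ext hi), zero_add]
  rw [Finset.sum_congr rfl fun i _ => key i, Finset.sum_add_distrib,
    Finset.sum_ite_eq' Finset.univ L (fun i => x i ^ 2), if_pos (Finset.mem_univ L)]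

lemma lastCoord_continuous (n : ℕ) : Continuous (lastCoord n) := by
  unfold lastCoord
  split_ifs with h
  · exact continuous_const
  · exact (continuous_apply _).comp (PiLp.continuous_ofLp 2 fun _ : Fin n => ℝ)

lemma cap_bound (n : ℕ) (hn : 2 ≤ n) {δ : ℝ} (hδ0 : 0 < δ) (hδ1 : δ ≤ 1) :
    sphMeasure n {y : sphere (0 : Euc n) 1 | xprimeSq n (y : Euc n) < δ ^ 2} ≤
      ENNReal.ofReal ((n : ℝ) * 2 ^ n * δ ^ (n - 1)) := by
  obtain ⟨m, rfl⟩ : ∃ m, n = m + 2 := ⟨n - 2, by omega⟩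
  set n := m + 2
  set s := {y : sphere (0 : Euc n) 1 | xprimeSq n (y : Euc n) < δ ^ 2} with hs
  have hmeas : MeasurableSet s := by
    have : IsOpen s :=
      isOpen_lt ((xprimeSq_continuous n).comp continuous_subtype_val) continuous_const
    exact this.measurableSet
  rw [sphMeasure, Measure.toSphere_apply' _ hmeas, finrank_euclideanSpace_fin]
  -- bound the cone by a box
  set b : Fin n → ℝ := fun i => if (i : ℕ) < n - 1 then δ else 1 with hb
  have hb0 : ∀ i, 0 < b i := fun i => by rw [hb]; dsimp only; split_ifs <;> norm_num [hδ0]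
  set B : Set (Euc n) :=
    (MeasurableEquiv.toLp 2 (Fin n → ℝ)).symm ⁻¹' (Set.pi univ fun i => Ioo (-(b i)) (b i)) with hB
  have hsub : (Ioo (0 : ℝ) 1 • ((↑) '' s)) ⊆ B := by
    rintro x hx
    rw [Set.mem_smul] at hx
    obtain ⟨r, hr, x', hx', rfl⟩ := hx
    obtain ⟨y, hy, rfl⟩ := hx'
    obtain ⟨hr0, hr1⟩ := hr
    have hynorm : ‖(y : Euc n)‖ = 1 := by
      have := y.2
      simpa [mem_sphere_iff_norm] using this
    intro i _
    show r • (y : Euc n) i ∈ Ioo (-(b i)) (b i)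
    have hcoord : r • (y : Euc n) i = r * (y : Euc n) i := rfl
    rw [hcoord]
    have hyle : ((y : Euc n) i) ^ 2 ≤ 1 := by
      have h1 := Finset.single_le_sum (f := fun j : Fin n => ((y : Euc n) j) ^ 2)
        (fun j _ => sq_nonneg _) (Finset.mem_univ i)
      rw [sum_sq_eq_one _ hynorm] at h1
      exact h1
    have hr2 : r ^ 2 < 1 := by nlinarith
    by_cases hi : (i : ℕ) < n - 1
    · have h2 : ((y : Euc n) i) ^ 2 < δ ^ 2 :=
        lt_of_le_of_lt (coord_sq_le_xprimeSq n _ i hi) hy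
      have haux : (r * (y : Euc n) i) ^ 2 < δ ^ 2 := by
        nlinarith [sq_nonneg ((y : Euc n) i), sq_nonneg r]
      simp only [hb, if_pos hi, Set.mem_Ioo]
      constructor
      · nlinarith [sq_nonneg (r * (y : Euc n) i + δ), haux]
      · nlinarith [sq_nonneg (r * (y : Euc n) i - δ), haux]
    · have haux : (r * (y : Euc n) i) ^ 2 < 1 := by
        nlinarith [sq_nonneg ((y : Euc n) i), sq_nonneg r]
      simp only [hb, if_neg hi, Set.mem_Ioo]
      constructor
      · nlinarith [sq_nonneg (r * (y : Euc n) i + 1), haux]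
      · nlinarith [sq_nonneg (r * (y : Euc n) i - 1), haux]
  have hvolB : volume B = ENNReal.ofReal (2 ^ n * δ ^ (n - 1)) := by
    rw [hB, (EuclideanSpace.volume_preserving_symm_measurableEquiv_toLp (Fin n)).measure_preimage
      (MeasurableSet.univ_pi fun i => measurableSet_Ioo).nullMeasurableSet,
      volume_pi_pi]
    have : ∀ i : Fin n, volume (Ioo (-(b i)) (b i)) = ENNReal.ofReal (2 * b i) := by
      intro i; rw [Real.volume_Ioo]; ring_nf
    rw [Finset.prod_congr rfl fun i _ => this i,
      ← ENNReal.ofReal_prod_of_nonneg (fun i _ => by positivity)]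
    congr 1
    have : ∀ i : Fin n, 2 * b i = if (i : ℕ) < n - 1 then 2 * δ else 2 := by
      intro i; rw [hb]; dsimp only; split_ifs <;> ring
    rw [Finset.prod_congr rfl fun i _ => this i, Fin.prod_univ_eq_prod_range
      (fun j => if j < n - 1 then 2 * δ else 2)]
    show (∏ j ∈ Finset.range (m + 1 + 1), if j < n - 1 then 2 * δ else 2) = _
    rw [Finset.prod_range_succ, if_neg (by omega),
      Finset.prod_congr rfl (fun j hj => if_pos (by simp at hj; omega)),
      Finset.prod_const, Finset.card_range]
    have h1 : n - 1 = m + 1 := rfl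
    rw [h1, mul_pow]
    ring
  calc (n : ℝ≥0∞) * volume (Ioo (0 : ℝ) 1 • (Subtype.val '' s))
      ≤ (n : ℝ≥0∞) * volume B := mul_le_mul_right (measure_mono hsub) _
    _ = ENNReal.ofReal ((n : ℝ) * 2 ^ n * δ ^ (n - 1)) := by
        rw [hvolB, ← ENNReal.ofReal_natCast n, ← ENNReal.ofReal_mul (by positivity), mul_assoc]

/-- For `q = 2`, `∫_{S^{n-1}} (|y'|² + ε² y_n²)^{(1-n)/2} dy ≤ C (1 + |log ε|)` for
`ε ∈ (0,1/2)`, with `C` depending only on `n`. -/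
theorem sphere_integral_bound_q_eq_two (n : ℕ) (hn : 2 ≤ n) :
    ∃ C : ℝ, ∀ ε : ℝ, 0 < ε → ε < 1 / 2 →
      (∫ y : sphere (0 : Euc n) 1,
          (xprimeSq n (y : Euc n) + ε ^ 2 * lastCoord n (y : Euc n) ^ 2) ^ ((1 - (n : ℝ)) / 2)
        ∂(sphMeasure n)) ≤ C * (1 + |Real.log ε|) := by
  have h2n : (2 : ℝ) ≤ (n : ℝ) := by exact_mod_cast hn
  set A : ℝ := (n : ℝ) * 2 ^ n with hA
  have hA0 : 0 ≤ A := by positivity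
  set M : ℝ≥0∞ := sphMeasure n Set.univ with hM
  have hMfin : M ≠ ∞ := by rw [hM, sphMeasure]; exact (measure_lt_top _ _).ne
  refine ⟨M.toReal + A * n, ?_⟩
  intro ε hε hε2
  set μ := sphMeasure n
  set c : ℝ := (1 - (n : ℝ)) / 2 with hc
  have hc0 : c < 0 := by rw [hc]; linarith
  set b : sphere (0 : Euc n) 1 → ℝ :=
    fun y => xprimeSq n (y : Euc n) + ε ^ 2 * lastCoord n (y : Euc n) ^ 2 with hb
  set F : sphere (0 : Euc n) 1 → ℝ := fun y => b y ^ c with hF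
  -- basic facts about b
  have hsum : ∀ y : sphere (0 : Euc n) 1,
      xprimeSq n (y : Euc n) + lastCoord n (y : Euc n) ^ 2 = 1 := by
    intro y
    rw [xprimeSq_add_last n (by omega) _, sum_sq_eq_one _ (by
      simpa [mem_sphere_zero_iff_norm] using y.2)]
  have hbge : ∀ y, ε ^ 2 ≤ b y := by
    intro y
    have h1 := hsum y
    have h2 := xprimeSq_nonneg n (y : Euc n)
    have hε1 : ε ^ 2 ≤ 1 := by nlinarith
    rw [hb]; dsimp only
    nlinarith [mul_nonneg h2 (by linarith : (0:ℝ) ≤ 1 - ε ^ 2), sq_nonneg (lastCoord n (y : Euc n))]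
  have hbpos : ∀ y, 0 < b y := fun y => lt_of_lt_of_le (by positivity) (hbge y)
  have hF0 : ∀ y, 0 ≤ F y := fun y => Real.rpow_nonneg (hbpos y).le c
  -- continuity
  have hbcont : Continuous b := by
    rw [hb]
    exact ((xprimeSq_continuous n).comp continuous_subtype_val).add
      (continuous_const.mul (((lastCoord_continuous n).comp continuous_subtype_val).pow 2))
  have hFcont : Continuous F := by
    rw [hF]
    exact hbcont.rpow_const fun y => Or.inl (hbpos y).ne'
  -- the truncation level
  set T : ℝ := ε ^ (1 - (n : ℝ)) with hT
  have hT1 : (1 : ℝ) ≤ T :=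
    Real.one_le_rpow_of_pos_of_le_one_of_nonpos hε (by linarith) (by linarith)
  have hFle : ∀ y, F y ≤ T := by
    intro y
    have h1 : F y ≤ (ε ^ 2) ^ c :=
      (Real.rpow_le_rpow_iff_of_neg (hbpos y) (by positivity) hc0).mpr (hbge y)
    have h2 : ((ε : ℝ) ^ 2) ^ c = T := by
      rw [hT, ← Real.rpow_natCast ε 2, ← Real.rpow_mul hε.le]
      congr 1
      rw [hc]; push_cast; ring
    rwa [h2] at h1
  -- pointwise cap estimate
  have hcap : ∀ t ∈ Ioc (1 : ℝ) T, μ {y | t < F y} ≤ ENNReal.ofReal (A * t⁻¹) := by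
    intro t ht
    obtain ⟨ht1, htT⟩ := ht
    have ht0 : (0 : ℝ) < t := by linarith
    set δ : ℝ := t ^ (c⁻¹ / 2) with hδ
    have hcinv : c⁻¹ < 0 := inv_neg''.mpr hc0
    have hδ0 : 0 < δ := Real.rpow_pos_of_pos ht0 _
    have hδ1 : δ ≤ 1 := Real.rpow_le_one_of_one_le_of_nonpos ht1.le (by linarith)
    have hsubset : {y | t < F y} ⊆ {y : sphere (0 : Euc n) 1 | xprimeSq n (y : Euc n) < δ ^ 2} := by
      intro y hy
      have hblt : b y < t ^ c⁻¹ := (Real.lt_rpow_inv_iff_of_neg (hbpos y) ht0 hc0).mpr hy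
      have hδ2 : δ ^ 2 = t ^ c⁻¹ := by
        rw [hδ, ← Real.rpow_natCast (t ^ (c⁻¹ / 2)) 2, ← Real.rpow_mul ht0.le]
        norm_num
      have hxb : xprimeSq n (y : Euc n) ≤ b y := by
        rw [hb]; dsimp only
        nlinarith [sq_nonneg (lastCoord n (y : Euc n)), sq_nonneg ε]
      simp only [Set.mem_setOf_eq]
      rw [hδ2]
      exact lt_of_le_of_lt hxb hblt
    have hδpow : δ ^ (n - 1) = t⁻¹ := by
      rw [hδ, ← Real.rpow_natCast _ (n - 1), ← Real.rpow_mul ht0.le]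
      have hcast : ((n - 1 : ℕ) : ℝ) = (n : ℝ) - 1 := by
        rw [Nat.cast_sub (by omega)]; norm_num
      rw [hcast]
      have h1n : 1 - (n : ℝ) ≠ 0 := by linarith
      have he : c⁻¹ / 2 * ((n : ℝ) - 1) = -1 := by
        rw [hc, inv_div]
        field_simp
        ring
      rw [he, Real.rpow_neg_one]
    calc μ {y | t < F y} ≤ μ {y : sphere (0 : Euc n) 1 | xprimeSq n (y : Euc n) < δ ^ 2} :=
          measure_mono hsubset
      _ ≤ ENNReal.ofReal ((n : ℝ) * 2 ^ n * δ ^ (n - 1)) := cap_bound n hn hδ0 hδ1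
      _ = ENNReal.ofReal (A * t⁻¹) := by rw [hA, hδpow]
  -- the three pieces
  have hS1 : ∫⁻ t in Ioc (0 : ℝ) 1, μ {y | t < F y} ≤ M := by
    calc ∫⁻ t in Ioc (0 : ℝ) 1, μ {y | t < F y} ≤ ∫⁻ _ in Ioc (0 : ℝ) 1, M :=
          lintegral_mono fun t => measure_mono (Set.subset_univ _)
      _ = M * volume (Ioc (0 : ℝ) 1) := setLIntegral_const _ _
      _ = M := by simp [Real.volume_Ioc]
  set R : ℝ := A * ((n : ℝ) - 1) * |Real.log ε| with hR
  have hR0 : 0 ≤ R := by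
    rw [hR]
    exact mul_nonneg (mul_nonneg hA0 (by linarith)) (abs_nonneg _)
  have hlogT : Real.log T = ((n : ℝ) - 1) * |Real.log ε| := by
    rw [hT, Real.log_rpow hε, abs_of_neg (Real.log_neg hε (by linarith))]
    ring
  have hS2 : ∫⁻ t in Ioc (1 : ℝ) T, ENNReal.ofReal (A * t⁻¹) = ENNReal.ofReal R := by
    have hInt : IntegrableOn (fun t : ℝ => A * t⁻¹) (Ioc 1 T) volume := by
      apply ((continuousOn_const.mul ((continuousOn_inv₀).mono ?_)).integrableOn_Icc).mono_set
        Ioc_subset_Icc_self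
      intro x hx
      simp only [Set.mem_compl_iff, Set.mem_singleton_iff]
      have := hx.1
      intro h; rw [h] at this; linarith
    rw [← ofReal_integral_eq_lintegral_ofReal hInt
      ((ae_restrict_iff' measurableSet_Ioc).2 (ae_of_all _ fun t ht => by
        have : (0:ℝ) < t := lt_trans one_pos ht.1
        positivity))]
    congr 1
    rw [← intervalIntegral.integral_of_le hT1, intervalIntegral.integral_const_mul,
      integral_inv (by
        intro h
        rw [Set.mem_uIcc] at h
        rcases h with ⟨h1, _⟩ | ⟨_, h2⟩ <;> linarith),
      div_one, hR, hlogT]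
    ring
  have hS3 : ∫⁻ t in Ioi T, μ {y | t < F y} = 0 := by
    have hzero : ∀ t ∈ Ioi T, μ {y | t < F y} = 0 := by
      intro t ht
      have : {y : sphere (0 : Euc n) 1 | t < F y} = ∅ := by
        rw [Set.eq_empty_iff_forall_notMem]
        intro y hy
        exact absurd hy (by simp only [Set.mem_setOf_eq, not_lt]; exact (hFle y).trans (le_of_lt ht))
      rw [this, measure_empty]
    calc ∫⁻ t in Ioi T, μ {y | t < F y}
        = ∫⁻ _ in Ioi T, 0 := setLIntegral_congr_fun measurableSet_Ioi
          hzero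
      _ = 0 := by simp
  have hsplit : ∫⁻ t in Ioi (0 : ℝ), μ {y | t < F y} ≤ M + ENNReal.ofReal R := by
    rw [← Set.Ioc_union_Ioi_eq_Ioi (zero_le_one : (0:ℝ) ≤ 1),
      lintegral_union measurableSet_Ioi (Set.Ioc_disjoint_Ioi le_rfl),
      ← Set.Ioc_union_Ioi_eq_Ioi hT1,
      lintegral_union measurableSet_Ioi (Set.Ioc_disjoint_Ioi le_rfl), hS3, add_zero]
    refine add_le_add hS1 ?_
    refine (setLIntegral_mono ((measurable_const.mul measurable_inv).ennreal_ofReal) hcap).trans ?_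
    exact hS2.le
  have hlayer := lintegral_eq_lintegral_meas_lt μ (ae_of_all _ hF0) hFcont.measurable.aemeasurable
  have hgoal : (∫ y, F y ∂μ) ≤ (M.toReal + A * n) * (1 + |Real.log ε|) := by
    rw [integral_eq_lintegral_of_nonneg_ae (ae_of_all _ hF0) hFcont.aestronglyMeasurable]
    calc (∫⁻ y, ENNReal.ofReal (F y) ∂μ).toReal
        ≤ (M + ENNReal.ofReal R).toReal := by
          apply ENNReal.toReal_mono
          · exact ENNReal.add_ne_top.2 ⟨hMfin, ENNReal.ofReal_ne_top⟩
          · rw [hlayer]; exact hsplit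
      _ = M.toReal + R := by
          rw [ENNReal.toReal_add hMfin ENNReal.ofReal_ne_top, ENNReal.toReal_ofReal hR0]
      _ ≤ (M.toReal + A * n) * (1 + |Real.log ε|) := by
          rw [hR]
          nlinarith [ENNReal.toReal_nonneg (a := M), abs_nonneg (Real.log ε),
            mul_nonneg hA0 (abs_nonneg (Real.log ε))]
  exact hgoal
end
end
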